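/- Let (A, [·,·], ρ) be a Lie algebroid, H a 3-form, π a bivector, and N : A → A a C∞-linear bundle map such that N∘π^# = π^#∘N*. Then for all X, Y ∈ Γ(A): ([π, [N̲, H̲]_RN]_RN + [N̲, [π, H̲]_RN]_RN)(X, Y) = 2 H̲(π, NX, Y) + 2 H̲(π, X, NY). -/

import Mathlib

open Finset

section Framework

variable {V : Type*} [AddCommGroup V] [Module ℝ V]

/-- The Koszul sign `ε(σ)` of a permutation `σ` acting on homogeneous elements whose
degrees are given by `d`. -/
def koszulSign {n : ℕ} (d : Fin n → ℤ) (σ : Equiv.Perm (Fin n)) : ℤ :=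
  ∏ p ∈ Finset.univ.filter (fun p : Fin n × Fin n => p.1 < p.2 ∧ σ p.2 < σ p.1),
    (-1 : ℤ) ^ (d (σ p.1) * d (σ p.2)).natAbs

/-- The `(k, n-k)`-unshuffles: permutations of `Fin n` which are increasing on the
first `k` indices and on the remaining ones. -/
def unshuffles (k n : ℕ) : Finset (Equiv.Perm (Fin n)) :=
  Finset.univ.filter (fun σ =>
    (∀ i j : Fin n, i < j → (j : ℕ) < k → σ i < σ j) ∧
    (∀ i j : Fin n, i < j → k ≤ (i : ℕ) → σ i < σ j))

/-- A (raw) vector valued `k`-form on the graded vector space with grading `𝒢`: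
it assigns, to homogeneous elements of degrees `d 0, …, d (k-1)`, an element of `V`. -/
abbrev GForm (𝒢 : ℤ → Submodule ℝ V) (k : ℕ) : Type _ :=
  (d : Fin k → ℤ) → ((i : Fin k) → 𝒢 (d i)) → V

/-- Transport of a vector valued form along an equality of arities. -/
def castForm {𝒢 : ℤ → Submodule ℝ V} {m n : ℕ} (h : m = n) (K : GForm 𝒢 m) : GForm 𝒢 n :=
  h ▸ K

variable (𝒢 : ℤ → Submodule ℝ V)

/-- Projection on the homogeneous component of degree `i`. -/
def prj [DirectSum.Decomposition 𝒢] (i : ℤ) (v : V) : 𝒢 i :=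
  DirectSum.decompose 𝒢 v i

/-- Insertion of a `k`-form `K` of degree `δK` into an `(l+1)`-form `L`:
`ι_K L (X_1,…,X_{k+l}) = Σ_{σ ∈ Sh(k,l)} ε(σ) L(K(X_{σ(1)},…,X_{σ(k)}), X_{σ(k+1)},…)`. -/
def insertPos [DirectSum.Decomposition 𝒢] {k l : ℕ} (δK : ℤ) (K : GForm 𝒢 k)
    (L : GForm 𝒢 (l + 1)) : GForm 𝒢 (k + l) := fun d x =>
  ∑ σ ∈ unshuffles k (k + l),
    koszulSign d σ •
      L (Fin.cons ((∑ i : Fin k, d (σ (Fin.castAdd l i))) + δK)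
          (fun j : Fin l => d (σ (Fin.natAdd k j))))
        (Fin.cons
          (prj 𝒢 ((∑ i : Fin k, d (σ (Fin.castAdd l i))) + δK)
            (K (fun i => d (σ (Fin.castAdd l i))) (fun i => x (σ (Fin.castAdd l i)))))
          (fun j : Fin l => x (σ (Fin.natAdd k j))))

/-- Insertion operator `ι_K L` of a `k`-form of degree `δK` into an `l`-form. -/
def insertionOp [DirectSum.Decomposition 𝒢] {k l : ℕ} (δK : ℤ) (K : GForm 𝒢 k) :
    GForm 𝒢 l → GForm 𝒢 (k + l - 1) :=
  match l with
  | 0 => fun _ => fun _ _ => 0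
  | _ + 1 => fun L => insertPos 𝒢 δK K L

/-- A formal sum of vector valued forms of all arities. -/
abbrev MultiForm : Type _ := (k : ℕ) → GForm 𝒢 k

/-- A single `k`-form seen as a formal sum concentrated in arity `k`. -/
def singleF (k : ℕ) (K : GForm 𝒢 k) : MultiForm 𝒢 :=
  fun n => if h : n = k then castForm h.symm K else 0

/-- The Richardson–Nijenhuis bracket `[K,L] = ι_K L - (-1)^{K̄ L̄} ι_L K` of formal
sums of forms `K` (of degree `δK`) and `L` (of degree `δL`), computed aritywise. -/
def rnBracketM [DirectSum.Decomposition 𝒢] (δK δL : ℤ) (K L : MultiForm 𝒢) : MultiForm 𝒢 :=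
  fun n =>
    (∑ p ∈ (Finset.range (n + 2)).attach,
      castForm (by have := Finset.mem_range.mp p.2; omega)
        (insertionOp 𝒢 δK (K p.1) (L (n + 1 - p.1))))
    - ((-1 : ℤ) ^ (δK * δL).natAbs) •
      (∑ p ∈ (Finset.range (n + 2)).attach,
        castForm (by have := Finset.mem_range.mp p.2; omega)
          (insertionOp 𝒢 δL (L p.1) (K (n + 1 - p.1))))

/-- `K` is a graded symmetric vector valued `k`-form of degree `δ`. -/
structure IsSymFormOfDeg {k : ℕ} (δ : ℤ) (K : GForm 𝒢 k) : Prop where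
  mem_grading : ∀ (d : Fin k → ℤ) (x : (i : Fin k) → 𝒢 (d i)), K d x ∈ 𝒢 ((∑ i, d i) + δ)
  map_add : ∀ (d : Fin k → ℤ) (x : (i : Fin k) → 𝒢 (d i)) (i : Fin k) (a b : 𝒢 (d i)),
    K d (Function.update x i (a + b)) = K d (Function.update x i a) + K d (Function.update x i b)
  map_smul : ∀ (d : Fin k → ℤ) (x : (i : Fin k) → 𝒢 (d i)) (i : Fin k) (c : ℝ) (a : 𝒢 (d i)),
    K d (Function.update x i (c • a)) = c • K d (Function.update x i a)
  symm : ∀ (d : Fin k → ℤ) (σ : Equiv.Perm (Fin k)) (x : (i : Fin k) → 𝒢 (d i)),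
    K (d ∘ σ) (fun i => x (σ i)) = koszulSign d σ • K d x

/-- The `L_∞` identities for a family `(l_i)` of symmetric vector valued forms of degree 1:
for each `n`, `Σ_{i+j=n+1} Σ_{σ ∈ Sh(i,j-1)} ε(σ) l_j (l_i (X_σ(1),…), X_…) = 0`. -/
def LInftyIdentity [DirectSum.Decomposition 𝒢] (l : MultiForm 𝒢) : Prop :=
  ∀ n : ℕ,
    (∑ p ∈ (Finset.range (n + 2)).attach,
      castForm (by have := Finset.mem_range.mp p.2; omega)
        (insertionOp 𝒢 1 (l p.1) (l (n + 1 - p.1)))) = (0 : GForm 𝒢 n)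

end Framework

section Gerstenhaber

variable {V : Type*} [AddCommGroup V] [Module ℝ V]

/-- A Gerstenhaber algebra structure on a graded vector space `(V, 𝒜)`: a graded
commutative associative product `wedge` together with a graded Lie bracket on the
shifted space which is a degree `i` derivation in each argument. -/
structure Gerstenhaber (𝒜 : ℤ → Submodule ℝ V) : Type _ where
  wedge : V →ₗ[ℝ] V →ₗ[ℝ] V
  bracket : V →ₗ[ℝ] V →ₗ[ℝ] V
  wedge_mem : ∀ (i j : ℤ) (x y : V), x ∈ 𝒜 i → y ∈ 𝒜 j → wedge x y ∈ 𝒜 (i + j)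
  bracket_mem : ∀ (i j : ℤ) (x y : V), x ∈ 𝒜 i → y ∈ 𝒜 j → bracket x y ∈ 𝒜 (i + j - 1)
  wedge_assoc : ∀ x y z, wedge (wedge x y) z = wedge x (wedge y z)
  wedge_comm : ∀ (i j : ℤ) (x y : V), x ∈ 𝒜 i → y ∈ 𝒜 j →
    wedge x y = ((-1 : ℤ) ^ (i * j).natAbs) • wedge y x
  bracket_antisymm : ∀ (i j : ℤ) (x y : V), x ∈ 𝒜 i → y ∈ 𝒜 j →
    bracket x y = -(((-1 : ℤ) ^ ((i - 1) * (j - 1)).natAbs) • bracket y x)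
  jacobi : ∀ (i j : ℤ) (x y z : V), x ∈ 𝒜 i → y ∈ 𝒜 j →
    bracket x (bracket y z) = bracket (bracket x y) z
      + ((-1 : ℤ) ^ ((i - 1) * (j - 1)).natAbs) • bracket y (bracket x z)
  leibniz : ∀ (i j : ℤ) (x y z : V), x ∈ 𝒜 i → y ∈ 𝒜 j →
    bracket x (wedge y z) = wedge (bracket x y) z
      + ((-1 : ℤ) ^ ((i - 1) * j).natAbs) • wedge y (bracket x z)

variable {𝒜 : ℤ → Submodule ℝ V}

/-- The grading of the graded vector space `E` with `E_{-k} := A^k`. -/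
abbrev negG (𝒜 : ℤ → Submodule ℝ V) : ℤ → Submodule ℝ V := fun i => 𝒜 (-i)

/-- Iterated wedge product of `k+1` elements. -/
def wedgeAll (G : Gerstenhaber 𝒜) : {k : ℕ} → (Fin (k + 1) → V) → V
  | 0, x => x 0
  | _ + 1, x => G.wedge (x 0) (wedgeAll G (fun i => x i.succ))

/-- The symmetric vector valued `k`-form `𝒩_k (P_1, …, P_k) := P_1 ∧ ⋯ ∧ P_k`. -/
def mathcalN (G : Gerstenhaber 𝒜) (𝒢 : ℤ → Submodule ℝ V) : (k : ℕ) → GForm 𝒢 k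
  | 0 => fun _ _ => 0
  | _ + 1 => fun _ x => wedgeAll G (fun i => (x i : V))

/-- The symmetric vector valued 2-form `l_2 (P_1, P_2) := (-1)^{|P_1|} [P_1, P_2]`. -/
def l2G (G : Gerstenhaber 𝒜) (𝒢 : ℤ → Submodule ℝ V) : GForm 𝒢 2 :=
  fun d x => ((-1 : ℤ) ^ (d 0).natAbs) • G.bracket (x 0) (x 1)

/-- The family `l_1 := 0`, `l_2`, and `l_i := ι_{l_2} 𝒩_{i-1}` for `i > 2`. -/
def lFormsG (G : Gerstenhaber 𝒜) (𝒢 : ℤ → Submodule ℝ V) [DirectSum.Decomposition 𝒢] :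
    (i : ℕ) → GForm 𝒢 i
  | 0 => 0
  | 1 => 0
  | 2 => l2G G 𝒢
  | i + 3 => castForm (by omega) (insertionOp 𝒢 1 (l2G G 𝒢) (mathcalN G 𝒢 (i + 2)))

end Gerstenhaber
section Algebroid

variable {V : Type*} [AddCommGroup V] [Module ℝ V]

/-- The grading of the graded vector space `Γ(∧A)[2]`, whose component of degree `i`
is `Γ(∧^{i+2} A)`. -/
abbrev shiftG (𝒜 : ℤ → Submodule ℝ V) : ℤ → Submodule ℝ V := fun i => 𝒜 (i + 2)

variable {𝒜 : ℤ → Submodule ℝ V}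

/-- The graded algebra `(V, 𝒜)` is a model of multivector fields: no negative degrees. -/
def IsMultivecGrading (𝒜 : ℤ → Submodule ℝ V) : Prop := ∀ i : ℤ, i < 0 → 𝒜 i = ⊥

/-- `D` is the extension by derivation of a `C^∞`-linear bundle map `N : A → A`:
it preserves the multivector degree, vanishes on functions and is a derivation of the
wedge product. -/
structure IsExtDer (G : Gerstenhaber 𝒜) (D : V →ₗ[ℝ] V) : Prop where
  grading : ∀ (k : ℤ) (x : V), x ∈ 𝒜 k → D x ∈ 𝒜 k
  on_fun : ∀ f : V, f ∈ 𝒜 0 → D f = 0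
  deriv : ∀ x y : V, D (G.wedge x y) = G.wedge (D x) y + G.wedge x (D y)

/-- The extension by derivation `N̲` of a bundle map, seen as a vector valued 1-form. -/
def extDerForm (𝒢 : ℤ → Submodule ℝ V) (D : V →ₗ[ℝ] V) : GForm 𝒢 1 :=
  fun _ x => D (x 0)

/-- An element of the graded vector space, seen as a vector valued 0-form. -/
def elemForm (𝒢 : ℤ → Submodule ℝ V) (v : V) : GForm 𝒢 0 :=
  fun _ _ => v

/-- A 1-form `α ∈ Γ(A^*)`, encoded through its contraction operator
`ι_α : Γ(∧^• A) → Γ(∧^{•-1} A)`, an odd derivation of the wedge product. -/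
structure OneForm (G : Gerstenhaber 𝒜) : Type _ where
  ctr : V →ₗ[ℝ] V
  ctr_mem : ∀ (i : ℤ) (x : V), x ∈ 𝒜 i → ctr x ∈ 𝒜 (i - 1)
  ctr_deriv : ∀ (i : ℤ) (x y : V), x ∈ 𝒜 i →
    ctr (G.wedge x y) = G.wedge (ctr x) y + ((-1 : ℤ) ^ i.natAbs) • G.wedge x (ctr y)

lemma wedge_mem_shift (G : Gerstenhaber 𝒜) {a b : ℤ} {Q R : V}
    (hQ : Q ∈ 𝒜 (a + 2)) (hR : R ∈ 𝒜 (b + 2)) : G.wedge Q R ∈ shiftG 𝒜 (a + b + 2) := by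
  have h := G.wedge_mem (a + 2) (b + 2) Q R hQ hR
  have e : (a + 2) + (b + 2) = a + b + 2 + 2 := by ring
  rwa [e] at h

/-- `c` is the extension by derivation `κ̲` of a `(k+1)`-form `κ ∈ Γ(∧^{k+1} A^*)`:
a graded symmetric vector valued `(k+1)`-form of degree `k-1` on `Γ(∧A)[2]`, vanishing
on functions and acting as a derivation in each argument. -/
structure IsFormExt (G : Gerstenhaber 𝒜) {k : ℕ} (c : GForm (shiftG 𝒜) (k + 1)) : Prop where
  symm : IsSymFormOfDeg (shiftG 𝒜) ((k : ℤ) - 1) c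
  on_fun : ∀ (d : Fin (k + 1) → ℤ) (x : (i : Fin (k + 1)) → shiftG 𝒜 (d i)),
    d 0 = -2 → c d x = 0
  deriv : ∀ (a b : ℤ) (Q R : V) (hQ : Q ∈ 𝒜 (a + 2)) (hR : R ∈ 𝒜 (b + 2))
      (ds : Fin k → ℤ) (xs : (i : Fin k) → shiftG 𝒜 (ds i)),
    c (Fin.cons (a + b + 2) ds)
        (Fin.cons (⟨G.wedge Q R, wedge_mem_shift G hQ hR⟩ : shiftG 𝒜 (a + b + 2)) xs)
      = G.wedge (c (Fin.cons a ds) (Fin.cons (⟨Q, hQ⟩ : shiftG 𝒜 a) xs)) R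
        + ((-1 : ℤ) ^ ((a + 2) * (b + 2)).natAbs) •
          G.wedge (c (Fin.cons b ds) (Fin.cons (⟨R, hR⟩ : shiftG 𝒜 b) xs)) Q

lemma mem_shift {i j : ℤ} (h : i + 2 = j) {x : V} (hx : x ∈ 𝒜 j) : x ∈ shiftG 𝒜 i := by
  show x ∈ 𝒜 (i + 2); rw [h]; exact hx

/-- A section `X ∈ Γ(A)` as a degree `-1` element of `Γ(∧A)[2]`. -/
def secE {X : V} (hX : X ∈ 𝒜 1) : shiftG 𝒜 (-1) := ⟨X, mem_shift (by norm_num) hX⟩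

/-- A bivector `π ∈ Γ(∧²A)` as a degree `0` element of `Γ(∧A)[2]`. -/
def bivE {p : V} (hp : p ∈ 𝒜 2) : shiftG 𝒜 0 := ⟨p, mem_shift (by norm_num) hp⟩

/-- Evaluation of (the arity 1 component of) a formal sum of vector valued forms
on one section. -/
def evalSec1 (F : MultiForm (shiftG 𝒜)) {X : V} (hX : X ∈ 𝒜 1) : V :=
  F 1 (fun _ => -1) (fun _ => secE hX)

/-- Evaluation of (the arity 2 component of) a formal sum of vector valued forms
on two sections. -/
def evalSec2 (F : MultiForm (shiftG 𝒜)) {X Y : V} (hX : X ∈ 𝒜 1) (hY : Y ∈ 𝒜 1) : V :=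
  F 2 (fun _ => -1) ![secE hX, secE hY]

/-- Evaluation of a vector valued 2-form on two sections. -/
def eval2Sec (c : GForm (shiftG 𝒜) 2) {X Y : V} (hX : X ∈ 𝒜 1) (hY : Y ∈ 𝒜 1) : V :=
  c (fun _ => -1) ![secE hX, secE hY]

/-- Evaluation of a vector valued 3-form on three sections. -/
def eval3Sec (c : GForm (shiftG 𝒜) 3) {X Y Z : V}
    (hX : X ∈ 𝒜 1) (hY : Y ∈ 𝒜 1) (hZ : Z ∈ 𝒜 1) : V :=
  c (fun _ => -1) ![secE hX, secE hY, secE hZ]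

/-- Evaluation of a vector valued 3-form on a bivector and two sections;
for the extension `H̲` of a 3-form `H` this computes `H̲(π, X, Y) = π^♯(H(X,Y,·))`. -/
def evalPXY (c : GForm (shiftG 𝒜) 3) {p X Y : V}
    (hp : p ∈ 𝒜 2) (hX : X ∈ 𝒜 1) (hY : Y ∈ 𝒜 1) : V :=
  c (Fin.cons 0 (fun _ => -1)) (Fin.cons (bivE hp) ![secE hX, secE hY])

/-- The Nijenhuis torsion `T_μ N (X,Y) = [NX, NY] - N[X,Y]_N` of a bundle map, expressed
via its extension by derivation `D`. -/
def torsionN (G : Gerstenhaber 𝒜) (D : V →ₗ[ℝ] V) (X Y : V) : V :=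
  G.bracket (D X) (D Y) - D (G.bracket (D X) Y + G.bracket X (D Y) - D (G.bracket X Y))

/-- `nal` is the dual `N^* α` of `al` with respect to the bundle map with extension `D`. -/
def IsDualMap (G : Gerstenhaber 𝒜) (D : V →ₗ[ℝ] V) (al nal : OneForm G) : Prop :=
  ∀ X : V, X ∈ 𝒜 1 → nal.ctr X = al.ctr (D X)

/-- The Lie derivative `L_Z α` of a 1-form evaluated on a section:
`(L_Z α)(X) = ρ(Z)(α(X)) - α([Z,X]) = [Z, α(X)]_SN - α([Z,X]_SN)`. -/
def lieDer (G : Gerstenhaber 𝒜) (Z : V) (al : OneForm G) (X : V) : V :=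
  G.bracket Z (al.ctr X) - al.ctr (G.bracket Z X)

/-- The Koszul bracket `{α,β}^π_μ` evaluated on a section `X`. -/
def koszulB (G : Gerstenhaber 𝒜) (p : V) (al be : OneForm G) (X : V) : V :=
  lieDer G (al.ctr p) be X - lieDer G (be.ctr p) al X - G.bracket X (be.ctr (al.ctr p))

/-- The deformed bracket `[Z,X]_N = [NZ,X] + [Z,NX] - N[Z,X]`. -/
def brN (G : Gerstenhaber 𝒜) (D : V →ₗ[ℝ] V) (Z X : V) : V :=
  G.bracket (D Z) X + G.bracket Z (D X) - D (G.bracket Z X)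

/-- The Lie derivative for the deformed Lie algebroid structure `μ^N` (anchor `ρ ∘ N`). -/
def lieDerN (G : Gerstenhaber 𝒜) (D : V →ₗ[ℝ] V) (Z : V) (al : OneForm G) (X : V) : V :=
  G.bracket (D Z) (al.ctr X) - al.ctr (brN G D Z X)

/-- The Koszul bracket `{α,β}^π_{μ^N}` of the deformed structure, evaluated on `X`. -/
def koszulBN (G : Gerstenhaber 𝒜) (D : V →ₗ[ℝ] V) (p : V) (al be : OneForm G) (X : V) : V :=
  lieDerN G D (al.ctr p) be X - lieDerN G D (be.ctr p) al X
    - G.bracket (D X) (be.ctr (al.ctr p))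

/-- The Magri–Morosi concomitant
`C(π,N)(α,β) = ({α,β}^π_μ)_{N^*} - {α,β}^π_{μ^N}` evaluated on a section `X`, where
`nal = N^*α` and `nbe = N^*β`. -/
def magriMorosi (G : Gerstenhaber 𝒜) (D : V →ₗ[ℝ] V) (p : V)
    (al be nal nbe : OneForm G) (X : V) : V :=
  (koszulB G p nal be X + koszulB G p al nbe X - koszulB G p al be (D X))
    - koszulBN G D p al be X

/-- Auxiliary: a degree vector for arity 3 forms. -/
def dvec3 (a b c : ℤ) : Fin 3 → ℤ := Fin.cons a (Fin.cons b (Fin.cons c Fin.elim0))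

/-- Auxiliary: a homogeneous 3-tuple. -/
def tuple3 {a b c : ℤ} (xa : shiftG 𝒜 a) (xb : shiftG 𝒜 b) (xc : shiftG 𝒜 c) :
    (i : Fin 3) → shiftG 𝒜 (dvec3 a b c i) :=
  Fin.cons xa (Fin.cons xb (Fin.cons xc finZeroElim))

/-- `D` applied to a homogeneous element, staying in the same degree. -/
def applyD {G : Gerstenhaber 𝒜} {D : V →ₗ[ℝ] V} (hD : IsExtDer G D) {i : ℤ}
    (p : shiftG 𝒜 i) : shiftG 𝒜 i :=
  ⟨D p, hD.grading (i + 2) p p.2⟩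

end Algebroid

section MoreHelpers

variable {V : Type*} [AddCommGroup V] [Module ℝ V] {𝒜 : ℤ → Submodule ℝ V}

lemma ctr_biv_mem (G : Gerstenhaber 𝒜) (al : OneForm G) {p : V} (hp : p ∈ 𝒜 2) :
    al.ctr p ∈ 𝒜 1 := by
  have h := al.ctr_mem 2 p hp
  norm_num at h
  exact h

/-- The 2-form `l_2(P,Q) := (-1)^{|P|}[P,Q]_SN` as a formal sum of forms on `Γ(∧A)[2]`. -/
def l2MF (G : Gerstenhaber 𝒜) : MultiForm (shiftG 𝒜) :=
  singleF (shiftG 𝒜) 2 (l2G G (shiftG 𝒜))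

variable (𝒜) in
/-- The extension by derivation `N̲` of a bundle map as a formal sum of forms. -/
def nMF (D : V →ₗ[ℝ] V) : MultiForm (shiftG 𝒜) :=
  singleF (shiftG 𝒜) 1 (extDerForm (shiftG 𝒜) D)

variable (𝒜) in
/-- A multivector (e.g. a bivector `π`) as a vector valued 0-form. -/
def bivMF (p : V) : MultiForm (shiftG 𝒜) :=
  singleF (shiftG 𝒜) 0 (elemForm (shiftG 𝒜) p)

/-- The extension by derivation `κ̲` of a `k`-form as a formal sum of forms. -/
def formMF {k : ℕ} (c : GForm (shiftG 𝒜) k) : MultiForm (shiftG 𝒜) :=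
  singleF (shiftG 𝒜) k c

end MoreHelpers

/-! On forms concentrated in a single arity the Richardson–Nijenhuis bracket is
`ι_K L ∓ ι_L K` in the expected arity, provided the forms vanish when an argument is zero.
Expanding the insertions on sections then gives
`[π,[N̲,H̲]](X,Y) = H̲(Nπ,X,Y) + H̲(π,NX,Y) + H̲(π,X,NY) - N H̲(π,X,Y)` and
`[N̲,[π,H̲]](X,Y) = H̲(π,NX,Y) + H̲(π,X,NY) - N H̲(π,X,Y)`.
The compatibility `N ∘ π^♯ = π^♯ ∘ N^*`, applied to the 1-form `α = H(X,Y,·)` whose dual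
`N^* α` contracts as the commutator `[ι_α, N̲]`, gives `H̲(Nπ,X,Y) = 2 N H̲(π,X,Y)`, and the
terms `N H̲(π,X,Y)` cancel. -/

section Forms

variable {V : Type*} [AddCommGroup V] [Module ℝ V] {𝒢 : ℤ → Submodule ℝ V}

theorem GForm.congr_of_val_eq {k : ℕ} (K : GForm 𝒢 k) {d d' : Fin k → ℤ} (hd : d = d')
    {x : (i : Fin k) → 𝒢 (d i)} {x' : (i : Fin k) → 𝒢 (d' i)}
    (hx : ∀ i, (x i : V) = (x' i : V)) : K d x = K d' x' := by
  subst hd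
  rw [funext fun i => Subtype.ext (hx i)]

/-- For a raw form `L`, the insertion `ι_0 L` of the zero form is `L(0, …)`, not `0`. -/
def GForm.VanishesAtZero {k : ℕ} (K : GForm 𝒢 k) : Prop :=
  ∀ (d : Fin k → ℤ) (x : (i : Fin k) → 𝒢 (d i)) (i : Fin k), x i = 0 → K d x = 0

open GForm

namespace GForm.VanishesAtZero

variable {k : ℕ} {K L : GForm 𝒢 k}

theorem sub (hK : VanishesAtZero K) (hL : VanishesAtZero L) : VanishesAtZero (K - L) :=
  fun d x i hi => by simp [hK d x i hi, hL d x i hi]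

theorem smul (c : ℤ) (hK : VanishesAtZero K) : VanishesAtZero (c • K) :=
  fun d x i hi => by simp [hK d x i hi]

theorem castForm {n : ℕ} (h : k = n) (hK : VanishesAtZero K) :
    VanishesAtZero (castForm h K) := by
  subst h
  exact hK

end GForm.VanishesAtZero

namespace IsSymFormOfDeg

variable {k : ℕ} {δ : ℤ} {K : GForm 𝒢 k}

theorem apply_eq_of_perm (hK : IsSymFormOfDeg 𝒢 δ K) (σ : Equiv.Perm (Fin k))
    {d d' : Fin k → ℤ} {x : (i : Fin k) → 𝒢 (d i)} {x' : (i : Fin k) → 𝒢 (d' i)}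
    (hd : d' = d ∘ σ) (hx : ∀ i, (x' i : V) = x (σ i)) : K d' x' = koszulSign d σ • K d x :=
  (congr_of_val_eq K hd hx).trans (hK.symm d σ x)

theorem vanishesAtZero (hK : IsSymFormOfDeg 𝒢 δ K) : VanishesAtZero K :=
  fun d x i hi => by simpa [← hi] using hK.map_smul d x i 0 (x i)

end IsSymFormOfDeg

variable (𝒢) in
theorem extDerForm_vanishesAtZero (D : V →ₗ[ℝ] V) :
    VanishesAtZero (extDerForm 𝒢 D) := fun d x i hi => by
  rw [extDerForm, Subsingleton.elim 0 i, hi, ZeroMemClass.coe_zero, map_zero]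

variable (𝒢) in
theorem elemForm_vanishesAtZero (v : V) :
    VanishesAtZero (elemForm 𝒢 v) := fun _ _ i => i.elim0

@[simp]
theorem castForm_zero {m n : ℕ} (h : m = n) : castForm h (0 : GForm 𝒢 m) = 0 := by
  subst h
  rfl

theorem singleF_self (k : ℕ) (K : GForm 𝒢 k) : singleF 𝒢 k K k = K :=
  dif_pos rfl

theorem singleF_of_ne {k n : ℕ} (K : GForm 𝒢 k) (h : n ≠ k) : singleF 𝒢 k K n = 0 :=
  dif_neg h

theorem singleF_castForm {m n : ℕ} (h : m = n) (K : GForm 𝒢 m) :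
    singleF 𝒢 n (castForm h K) = singleF 𝒢 m K := by
  subst h
  rfl

theorem singleF_sub (k : ℕ) (K L : GForm 𝒢 k) :
    singleF 𝒢 k (K - L) = singleF 𝒢 k K - singleF 𝒢 k L := by
  funext n
  by_cases h : n = k
  · subst h
    simp only [singleF_self, Pi.sub_apply]
  · simp only [singleF_of_ne _ h, Pi.sub_apply, sub_zero]

theorem singleF_smul (k : ℕ) (c : ℤ) (K : GForm 𝒢 k) :
    singleF 𝒢 k (c • K) = c • singleF 𝒢 k K := by
  funext n
  by_cases h : n = k
  · subst h
    simp only [singleF_self, Pi.smul_apply]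
  · simp only [singleF_of_ne _ h, Pi.smul_apply, smul_zero]

end Forms

theorem koszulSign_one {n : ℕ} (d : Fin n → ℤ) : koszulSign d 1 = 1 := by
  unfold koszulSign
  rw [Finset.filter_false_of_mem, Finset.prod_empty]
  rintro p - ⟨h1, h2⟩
  exact (h1.trans h2).false

theorem unshuffles_zero_left (n : ℕ) : unshuffles 0 n = {1} := by
  ext σ
  simp only [unshuffles, Finset.mem_filter, Finset.mem_univ, true_and, Finset.mem_singleton,
    Nat.not_lt_zero, zero_le]
  refine ⟨fun h => Equiv.ext fun i => StrictMono.apply_eq fun i j hij => h.2 i j hij trivial,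
    ?_⟩
  rintro rfl
  exact ⟨fun _ _ _ h => h.elim, fun _ _ hij _ => hij⟩

theorem unshuffles_self (n : ℕ) : unshuffles n (n + 0) = {1} := by
  ext σ
  simp only [unshuffles, Finset.mem_filter, Finset.mem_univ, true_and, Finset.mem_singleton]
  refine ⟨fun h => Equiv.ext fun i => StrictMono.apply_eq fun i j hij => h.1 i j hij j.2, ?_⟩
  rintro rfl
  exact ⟨fun i j hij _ => hij, fun i j hij _ => hij⟩

open GForm

section Insertion

variable {V : Type*} [AddCommGroup V] [Module ℝ V] {𝒢 : ℤ → Submodule ℝ V}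
  [DirectSum.Decomposition 𝒢]

theorem prj_coe_of_mem {i : ℤ} {v : V} (hv : v ∈ 𝒢 i) : ((prj 𝒢 i v : 𝒢 i) : V) = v :=
  DirectSum.decompose_of_mem_same 𝒢 hv

@[simp]
theorem prj_zero (i : ℤ) : prj 𝒢 i (0 : V) = 0 := by
  simp [prj]

theorem insertionOp_succ {k l : ℕ} (δ : ℤ) (K : GForm 𝒢 k) (L : GForm 𝒢 (l + 1)) :
    insertionOp 𝒢 δ K L = insertPos 𝒢 δ K L := rfl

@[simp]
theorem insertionOp_arity_zero {k : ℕ} (δ : ℤ) (K : GForm 𝒢 k) (L : GForm 𝒢 0) :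
    insertionOp 𝒢 δ K L = 0 := rfl

theorem insertionOp_zero_right {k l : ℕ} (δ : ℤ) (K : GForm 𝒢 k) :
    insertionOp 𝒢 δ K (0 : GForm 𝒢 l) = 0 := by
  cases l with
  | zero => rfl
  | succ l =>
    funext d x
    simp [insertionOp, insertPos]

theorem insertionOp_zero_left {k l : ℕ} (δ : ℤ) {L : GForm 𝒢 l} (hL : VanishesAtZero L) :
    insertionOp 𝒢 δ (0 : GForm 𝒢 k) L = 0 := by
  cases l with
  | zero => rfl
  | succ l =>
    funext d x
    refine Finset.sum_eq_zero fun σ _ => ?_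
    rw [hL _ _ 0, smul_zero]
    exact prj_zero _

theorem GForm.VanishesAtZero.insertionOp {k l : ℕ} (δ : ℤ) {K : GForm 𝒢 k}
    {L : GForm 𝒢 l} (hK : VanishesAtZero K) (hL : VanishesAtZero L) :
    VanishesAtZero (insertionOp 𝒢 δ K L) := by
  cases l with
  | zero => exact fun _ _ _ _ => rfl
  | succ l =>
    intro d x i hi
    refine Finset.sum_eq_zero fun σ _ => ?_
    obtain ⟨j, rfl⟩ := σ.surjective i
    induction j using Fin.addCases with
    | left a =>
      rw [hL _ _ 0, smul_zero]
      show prj 𝒢 _ (K _ fun i => x (σ (Fin.castAdd l i))) = 0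
      rw [hK _ _ a hi, prj_zero]
    | right b =>
      rw [hL _ _ b.succ, smul_zero]
      exact hi

theorem insertPos_elemForm {δ : ℤ} {v : V} (hv : v ∈ 𝒢 δ) {l : ℕ} (L : GForm 𝒢 (l + 1))
    (d : Fin (0 + l) → ℤ) (x : (i : Fin (0 + l)) → 𝒢 (d i)) :
    insertPos 𝒢 δ (elemForm 𝒢 v) L d x
      = L (Fin.cons δ fun j => d (Fin.natAdd 0 j))
          (Fin.cons ⟨v, hv⟩ fun j => x (Fin.natAdd 0 j)) := by
  rw [insertPos, unshuffles_zero_left, Finset.sum_singleton, koszulSign_one, one_smul]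
  refine congr_of_val_eq L (by simp) fun i => ?_
  induction i using Fin.cases with
  | zero => exact prj_coe_of_mem (by simpa [elemForm] using hv)
  | succ j => rfl

theorem insertPos_extDerForm {k : ℕ} (δ : ℤ) (K : GForm 𝒢 k) (D : V →ₗ[ℝ] V)
    (d : Fin (k + 0) → ℤ) (x : (i : Fin (k + 0)) → 𝒢 (d i))
    (hK : K d x ∈ 𝒢 (∑ i, d i + δ)) :
    insertPos 𝒢 δ K (extDerForm 𝒢 D) d x = D (K d x) := by
  rw [insertPos, unshuffles_self, Finset.sum_singleton, koszulSign_one, one_smul]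
  exact congrArg D (prj_coe_of_mem hK)

theorem castForm_insertionOp_singleF (δ : ℤ) {k l p q n : ℕ} (K : GForm 𝒢 k)
    {L : GForm 𝒢 l} (hL : VanishesAtZero L) (h : p + q - 1 = n) :
    castForm h (insertionOp 𝒢 δ (singleF 𝒢 k K p) (singleF 𝒢 l L q))
      = if hpq : p = k ∧ q = l then castForm (by omega) (insertionOp 𝒢 δ K L) else 0 := by
  split_ifs with hpq
  · obtain ⟨rfl, rfl⟩ := hpq
    rw [singleF_self, singleF_self]
  · by_cases hq : q = l
    · subst hq
      rw [singleF_of_ne K (by tauto), singleF_self, insertionOp_zero_left δ hL, castForm_zero]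
    · rw [singleF_of_ne L hq, insertionOp_zero_right, castForm_zero]

theorem sum_insertionOp_singleF (δ : ℤ) {k l : ℕ} (K : GForm 𝒢 k) {L : GForm 𝒢 l}
    (hL : VanishesAtZero L) (n : ℕ) :
    ∑ p ∈ (Finset.range (n + 2)).attach,
        castForm (by have := Finset.mem_range.mp p.2; omega)
          (insertionOp 𝒢 δ (singleF 𝒢 k K p.1) (singleF 𝒢 l L (n + 1 - p.1)))
      = singleF 𝒢 (k + l - 1) (insertionOp 𝒢 δ K L) n := by
  simp only [castForm_insertionOp_singleF δ K hL]
  by_cases hn : n = k + l - 1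
  · subst hn
    rw [singleF_self]
    by_cases hkl : k + l = 0
    · obtain ⟨rfl, rfl⟩ : k = 0 ∧ l = 0 := by omega
      exact Finset.sum_eq_zero fun p _ => by split_ifs <;> rfl
    rw [Finset.sum_eq_single_of_mem ⟨k, Finset.mem_range.mpr (by omega)⟩
      (Finset.mem_attach _ _)]
    · rw [dif_pos ⟨rfl, by dsimp only; omega⟩]
      rfl
    · rintro p - hp
      exact dif_neg fun h => hp (Subtype.ext h.1)
  · rw [singleF_of_ne _ hn]
    refine Finset.sum_eq_zero fun p _ => dif_neg fun h => hn ?_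
    have := Finset.mem_range.mp p.2
    omega

theorem rnBracketM_singleF (δK δL : ℤ) {k l : ℕ} {K : GForm 𝒢 k} {L : GForm 𝒢 l}
    (hK : VanishesAtZero K) (hL : VanishesAtZero L) :
    rnBracketM 𝒢 δK δL (singleF 𝒢 k K) (singleF 𝒢 l L)
      = singleF 𝒢 (k + l - 1) (insertionOp 𝒢 δK K L
          - (-1 : ℤ) ^ (δK * δL).natAbs • castForm (by omega) (insertionOp 𝒢 δL L K)) := by
  funext n
  simp only [rnBracketM, sum_insertionOp_singleF δK K hL, sum_insertionOp_singleF δL L hK,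
    singleF_sub, singleF_smul, singleF_castForm, Pi.sub_apply, Pi.smul_apply]

end Insertion

section Sections

variable {V : Type*} [AddCommGroup V] [Module ℝ V] {𝒜 : ℤ → Submodule ℝ V}
  {G : Gerstenhaber 𝒜} {D : V →ₗ[ℝ] V} {c3 : GForm (shiftG 𝒜) 3} {π X Y : V}

theorem evalSec2_add (F F' : MultiForm (shiftG 𝒜)) (hX : X ∈ 𝒜 1) (hY : Y ∈ 𝒜 1) :
    evalSec2 (F + F') hX hY = evalSec2 F hX hY + evalSec2 F' hX hY :=
  rfl

theorem evalPXY_sub (F F' : GForm (shiftG 𝒜) 3) (hπ : π ∈ 𝒜 2) (hX : X ∈ 𝒜 1)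
    (hY : Y ∈ 𝒜 1) : evalPXY (F - F') hπ hX hY = evalPXY F hπ hX hY - evalPXY F' hπ hX hY :=
  rfl

theorem evalPXY_mem (hH : IsFormExt G c3) (hπ : π ∈ 𝒜 2) (hX : X ∈ 𝒜 1) (hY : Y ∈ 𝒜 1) :
    evalPXY c3 hπ hX hY ∈ 𝒜 1 := by
  have h := hH.symm.mem_grading (Fin.cons 0 fun _ => -1)
    (Fin.cons (bivE hπ) ![secE hX, secE hY])
  convert h using 2
  · simp [Fin.sum_univ_succ]
  · rfl

theorem evalPXY_swap {δ : ℤ} (hs : IsSymFormOfDeg (shiftG 𝒜) δ c3) (hπ : π ∈ 𝒜 2)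
    (hX : X ∈ 𝒜 1) (hY : Y ∈ 𝒜 1) : evalPXY c3 hπ hY hX = -evalPXY c3 hπ hX hY := by
  rw [evalPXY, hs.apply_eq_of_perm (Equiv.swap 1 2) (d := Fin.cons 0 fun _ => -1)
    (x := Fin.cons (bivE hπ) ![secE hX, secE hY]) (funext fun i => by fin_cases i <;> rfl)
    fun i => by fin_cases i <;> rfl]
  rw [show koszulSign (Fin.cons 0 fun _ => -1 : Fin 3 → ℤ) (Equiv.swap 1 2) = -1 by decide,
    neg_one_smul]
  rfl

variable [DirectSum.Decomposition (shiftG 𝒜)]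

theorem insertionOp_elemForm_apply_secs (F : GForm (shiftG 𝒜) 3) (hπ : π ∈ 𝒜 2)
    (hX : X ∈ 𝒜 1) (hY : Y ∈ 𝒜 1) :
    insertionOp (shiftG 𝒜) 0 (elemForm (shiftG 𝒜) π) F (fun _ => -1) ![secE hX, secE hY]
      = evalPXY F hπ hX hY := by
  rw [insertionOp_succ, insertPos_elemForm (mem_shift (i := 0) (by norm_num) hπ)]
  refine congr_of_val_eq F rfl fun i => ?_
  induction i using Fin.cases with
  | zero => rfl
  | succ j => fin_cases j <;> rfl

theorem insertionOp_extDerForm_apply_secs (hD : IsExtDer G D) (K : GForm (shiftG 𝒜) 2)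
    (hX : X ∈ 𝒜 1) (hY : Y ∈ 𝒜 1) :
    insertionOp (shiftG 𝒜) 0 (extDerForm (shiftG 𝒜) D) K (fun _ => -1) ![secE hX, secE hY]
      = eval2Sec K (hD.grading 1 X hX) hY - eval2Sec K (hD.grading 1 Y hY) hX := by
  rw [insertionOp_succ, insertPos, show unshuffles 1 (1 + 1) = {1, Equiv.swap 0 1} by decide,
    Finset.sum_insert (by decide), Finset.sum_singleton, koszulSign_one, one_smul,
    show koszulSign (fun _ => -1 : Fin 2 → ℤ) (Equiv.swap 0 1) = -1 by decide, neg_one_smul,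
    ← sub_eq_add_neg]
  congr 1 <;> refine congr_of_val_eq K (funext fun i => by fin_cases i <;> rfl) fun i => ?_ <;>
    fin_cases i
  all_goals first
    | rfl
    | exact prj_coe_of_mem (mem_shift (by decide) (hD.grading 1 _ ‹_›))

theorem evalPXY_insertionOp_extDerForm (hD : IsExtDer G D) {δ : ℤ}
    (hs : IsSymFormOfDeg (shiftG 𝒜) δ c3) (hπ : π ∈ 𝒜 2) (hX : X ∈ 𝒜 1) (hY : Y ∈ 𝒜 1) :
    evalPXY (insertionOp (shiftG 𝒜) 0 (extDerForm (shiftG 𝒜) D) c3) hπ hX hY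
      = evalPXY c3 (hD.grading 2 π hπ) hX hY + evalPXY c3 hπ (hD.grading 1 X hX) hY
        + evalPXY c3 hπ hX (hD.grading 1 Y hY) := by
  have hDπ := hD.grading 2 π hπ
  have hDX := hD.grading 1 X hX
  have hDY := hD.grading 1 Y hY
  rw [evalPXY, insertionOp_succ, insertPos,
    show unshuffles 1 (1 + 2) = {1, Equiv.swap 0 1, Equiv.swap 1 2 * Equiv.swap 0 1} by decide,
    Finset.sum_insert (by decide), Finset.sum_insert (by decide), Finset.sum_singleton,
    add_assoc]
  congr 1
  · rw [koszulSign_one, one_smul]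
    refine congr_of_val_eq c3 (funext fun i => by fin_cases i <;> rfl) fun i => ?_
    fin_cases i
    · exact prj_coe_of_mem (mem_shift (by decide) hDπ)
    all_goals rfl
  congr 1
  · rw [show koszulSign (Fin.cons 0 fun _ => -1 : Fin 3 → ℤ) (Equiv.swap 0 1) = 1 by decide,
      one_smul, hs.apply_eq_of_perm (Equiv.swap 0 1) (d := Fin.cons 0 fun _ => -1)
        (x := Fin.cons (bivE hπ) ![secE hDX, secE hY]) (funext fun i => by fin_cases i <;> rfl),
      show koszulSign (Fin.cons 0 fun _ => -1 : Fin 3 → ℤ) (Equiv.swap 0 1) = 1 by decide,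
      one_smul]
    · rfl
    intro i
    fin_cases i
    · exact prj_coe_of_mem (mem_shift (by decide) hDX)
    all_goals rfl
  · rw [show koszulSign (Fin.cons 0 fun _ => -1 : Fin 3 → ℤ)
        (Equiv.swap 1 2 * Equiv.swap 0 1) = -1 by decide,
      hs.apply_eq_of_perm (Equiv.swap 1 2 * Equiv.swap 0 1) (d := Fin.cons 0 fun _ => -1)
        (x := Fin.cons (bivE hπ) ![secE hX, secE hDY]) (funext fun i => by fin_cases i <;> rfl),
      show koszulSign (Fin.cons 0 fun _ => -1 : Fin 3 → ℤ)
        (Equiv.swap 1 2 * Equiv.swap 0 1) = -1 by decide, neg_one_smul, neg_one_smul, neg_neg]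
    · rfl
    intro i
    fin_cases i
    · exact prj_coe_of_mem (mem_shift (by decide) hDY)
    all_goals rfl

theorem evalPXY_insertionOp_into_extDerForm (hH : IsFormExt G c3) (hπ : π ∈ 𝒜 2)
    (hX : X ∈ 𝒜 1) (hY : Y ∈ 𝒜 1) :
    evalPXY (insertionOp (shiftG 𝒜) 1 c3 (extDerForm (shiftG 𝒜) D)) hπ hX hY
      = D (evalPXY c3 hπ hX hY) :=
  insertPos_extDerForm 1 c3 D _ _ (mem_shift (by decide) (evalPXY_mem hH hπ hX hY))

end Sections

theorem neg_one_pow_natAbs_mul_add_two_mul (i j : ℤ) :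
    (-1 : ℤ) ^ (i * (j + 2)).natAbs * (-1 : ℤ) ^ ((j + 1) * i).natAbs
      = (-1 : ℤ) ^ i.natAbs := by
  simp only [← Int.coe_negOnePow ℤ, Int.cast_id, ← Units.val_mul, ← Int.negOnePow_add]
  rw [Units.val_inj, Int.negOnePow_eq_iff]
  exact ⟨i * (j + 1), by ring⟩

section Contraction

variable {V : Type*} [AddCommGroup V] [Module ℝ V] {𝒜 : ℤ → Submodule ℝ V}
  [DirectSum.Decomposition (shiftG 𝒜)] {G : Gerstenhaber 𝒜} {c3 : GForm (shiftG 𝒜) 3}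
  {δ : ℤ} {X Y : V}

def contractionComponent (hs : IsSymFormOfDeg (shiftG 𝒜) δ c3) (hX : X ∈ 𝒜 1)
    (hY : Y ∈ 𝒜 1) (i : ℤ) : shiftG 𝒜 i →ₗ[ℝ] V where
  toFun P := c3 (Fin.cons i fun _ => -1) (Fin.cons P ![secE hX, secE hY])
  map_add' P Q := by
    have h := hs.map_add (Fin.cons i fun _ => -1) (Fin.cons P ![secE hX, secE hY]) 0 P Q
    erw [Fin.update_cons_zero, Fin.update_cons_zero, Fin.update_cons_zero] at h
    exact h
  map_smul' c P := by
    have h := hs.map_smul (Fin.cons i fun _ => -1) (Fin.cons P ![secE hX, secE hY]) 0 c P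
    erw [Fin.update_cons_zero, Fin.update_cons_zero] at h
    exact h

/-- The contraction `ι_α` by the 1-form `α = H(X, Y, ·)`: `P ↦ H̲(P, X, Y)` on each
homogeneous component. -/
def contraction (hs : IsSymFormOfDeg (shiftG 𝒜) δ c3) (hX : X ∈ 𝒜 1) (hY : Y ∈ 𝒜 1) :
    V →ₗ[ℝ] V :=
  DirectSum.toModule ℝ ℤ V (contractionComponent hs hX hY) ∘ₗ
    (DirectSum.decomposeLinearEquiv (shiftG 𝒜)).toLinearMap

theorem contraction_apply_of_mem (hs : IsSymFormOfDeg (shiftG 𝒜) δ c3) (hX : X ∈ 𝒜 1)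
    (hY : Y ∈ 𝒜 1) {P : V} {i : ℤ} (hP : P ∈ shiftG 𝒜 i) :
    contraction hs hX hY P
      = c3 (Fin.cons i fun _ => -1) (Fin.cons ⟨P, hP⟩ ![secE hX, secE hY]) := by
  have h : (DirectSum.decomposeLinearEquiv (shiftG 𝒜)).toLinearMap P
      = DirectSum.lof ℝ ℤ (fun i => shiftG 𝒜 i) i ⟨P, hP⟩ := by
    rw [DirectSum.lof_eq_of]
    exact DirectSum.decompose_of_mem (shiftG 𝒜) hP
  rw [contraction, LinearMap.comp_apply, h, DirectSum.toModule_lof]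
  rfl

theorem contraction_mem (hH : IsFormExt G c3) (hX : X ∈ 𝒜 1) (hY : Y ∈ 𝒜 1) {i : ℤ}
    {P : V} (hP : P ∈ 𝒜 i) : contraction hH.symm hX hY P ∈ 𝒜 (i - 1) := by
  have hP' : P ∈ shiftG 𝒜 (i - 2) := mem_shift (by ring) hP
  have h := hH.symm.mem_grading (Fin.cons (i - 2) fun _ => -1)
    (Fin.cons ⟨P, hP'⟩ ![secE hX, secE hY])
  rw [contraction_apply_of_mem hH.symm hX hY hP']
  convert h using 2
  simp [Fin.sum_univ_succ]
  ring

theorem contraction_wedge_of_mem (hH : IsFormExt G c3) (hX : X ∈ 𝒜 1) (hY : Y ∈ 𝒜 1)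
    {i j : ℤ} {P Q : V} (hP : P ∈ 𝒜 i) (hQ : Q ∈ 𝒜 (j + 2)) :
    contraction hH.symm hX hY (G.wedge P Q)
      = G.wedge (contraction hH.symm hX hY P) Q
        + (-1 : ℤ) ^ i.natAbs • G.wedge P (contraction hH.symm hX hY Q) := by
  have hP' : P ∈ 𝒜 (i - 2 + 2) := by rwa [sub_add_cancel]
  have hιQ : contraction hH.symm hX hY Q ∈ 𝒜 (j + 1) := by
    simpa [add_sub_assoc] using contraction_mem hH hX hY hQ
  have hιP' : c3 (Fin.cons (i - 2) fun _ => -1)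
      (Fin.cons (⟨P, hP'⟩ : shiftG 𝒜 (i - 2)) ![secE hX, secE hY])
      = contraction hH.symm hX hY P := (contraction_apply_of_mem hH.symm hX hY hP').symm
  have hιQ' : c3 (Fin.cons j fun _ => -1) (Fin.cons (⟨Q, hQ⟩ : shiftG 𝒜 j) ![secE hX, secE hY])
      = contraction hH.symm hX hY Q := (contraction_apply_of_mem hH.symm hX hY hQ).symm
  rw [contraction_apply_of_mem hH.symm hX hY (wedge_mem_shift G hP' hQ)]
  refine (hH.deriv (i - 2) j P Q hP' hQ (fun _ => -1) ![secE hX, secE hY]).trans ?_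
  rw [hιP', hιQ', G.wedge_comm _ _ _ _ hιQ hP, smul_smul, sub_add_cancel,
    neg_one_pow_natAbs_mul_add_two_mul]

theorem contraction_wedge (hH : IsFormExt G c3) (hX : X ∈ 𝒜 1) (hY : Y ∈ 𝒜 1)
    {i : ℤ} {P : V} (hP : P ∈ 𝒜 i) (Q : V) :
    contraction hH.symm hX hY (G.wedge P Q)
      = G.wedge (contraction hH.symm hX hY P) Q
        + (-1 : ℤ) ^ i.natAbs • G.wedge P (contraction hH.symm hX hY Q) := by
  induction Q using DirectSum.Decomposition.inductionOn (ℳ := shiftG 𝒜) with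
  | zero => simp
  | homogeneous Q => exact contraction_wedge_of_mem hH hX hY hP Q.2
  | add Q R hQ hR =>
    simp only [map_add, smul_add, hQ, hR]
    abel

def OneForm.ofForm3 (hH : IsFormExt G c3) (hX : X ∈ 𝒜 1) (hY : Y ∈ 𝒜 1) : OneForm G where
  ctr := contraction hH.symm hX hY
  ctr_mem _ _ := contraction_mem hH hX hY
  ctr_deriv _ _ Q hP := contraction_wedge hH hX hY hP Q

end Contraction

section Dual

variable {V : Type*} [AddCommGroup V] [Module ℝ V] {𝒜 : ℤ → Submodule ℝ V}
  {G : Gerstenhaber 𝒜} {D : V →ₗ[ℝ] V}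

/-- `N^* α`, whose contraction is the commutator `[ι_α, N̲]`. -/
def OneForm.dual (hD : IsExtDer G D) (α : OneForm G) : OneForm G where
  ctr := α.ctr ∘ₗ D - D ∘ₗ α.ctr
  ctr_mem i P hP := sub_mem (α.ctr_mem i (D P) (hD.grading i P hP))
    (hD.grading (i - 1) _ (α.ctr_mem i P hP))
  ctr_deriv i P Q hP := by
    simp only [LinearMap.sub_apply, LinearMap.comp_apply]
    rw [hD.deriv P Q, map_add, α.ctr_deriv i (D P) Q (hD.grading i P hP),
      α.ctr_deriv i P (D Q) hP, α.ctr_deriv i P Q hP, map_add, hD.deriv (α.ctr P) Q,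
      map_zsmul D, hD.deriv P (α.ctr Q), map_sub G.wedge, LinearMap.sub_apply,
      map_sub (G.wedge P), smul_sub, smul_add]
    abel

theorem OneForm.isDualMap_dual (hD : IsExtDer G D) (α : OneForm G) :
    IsDualMap G D α (α.dual hD) := fun X hX => by
  have hαX : α.ctr X ∈ 𝒜 0 := by simpa using α.ctr_mem 1 X hX
  simp [OneForm.dual, hD.on_fun _ hαX]

end Dual

section Brackets

variable {V : Type*} [AddCommGroup V] [Module ℝ V] {𝒜 : ℤ → Submodule ℝ V}
  [DirectSum.Decomposition (shiftG 𝒜)] {G : Gerstenhaber 𝒜} {c3 : GForm (shiftG 𝒜) 3}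
  {π : V} {D : V →ₗ[ℝ] V} {X Y : V}

theorem evalPXY_extDer_eq_two_smul (hH : IsFormExt G c3) (hD : IsExtDer G D) (hπ : π ∈ 𝒜 2)
    (hNπ : ∀ al nal : OneForm G, IsDualMap G D al nal → D (al.ctr π) = nal.ctr π)
    (hX : X ∈ 𝒜 1) (hY : Y ∈ 𝒜 1) :
    evalPXY c3 (hD.grading 2 π hπ) hX hY = (2 : ℝ) • D (evalPXY c3 hπ hX hY) := by
  let α := OneForm.ofForm3 hH hX hY
  have hαπ : α.ctr π = evalPXY c3 hπ hX hY :=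
    contraction_apply_of_mem hH.symm hX hY (mem_shift (i := 0) (by norm_num) hπ)
  have hαDπ : α.ctr (D π) = evalPXY c3 (hD.grading 2 π hπ) hX hY :=
    contraction_apply_of_mem hH.symm hX hY
      (mem_shift (i := 0) (by norm_num) (hD.grading 2 π hπ))
  have h := hNπ α (α.dual hD) (α.isDualMap_dual hD)
  simp only [OneForm.dual, LinearMap.sub_apply, LinearMap.comp_apply, hαπ, hαDπ] at h
  rw [two_smul]
  exact (eq_sub_iff_add_eq.mp h).symm

theorem evalSec2_rnBracket_biv_rnBracket_extDer (hH : IsFormExt G c3) (hD : IsExtDer G D)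
    (hπ : π ∈ 𝒜 2) (hX : X ∈ 𝒜 1) (hY : Y ∈ 𝒜 1) :
    evalSec2 (rnBracketM (shiftG 𝒜) 0 1 (bivMF 𝒜 π)
        (rnBracketM (shiftG 𝒜) 0 1 (nMF 𝒜 D) (formMF c3))) hX hY
      = evalPXY c3 (hD.grading 2 π hπ) hX hY + evalPXY c3 hπ (hD.grading 1 X hX) hY
        + evalPXY c3 hπ hX (hD.grading 1 Y hY) - D (evalPXY c3 hπ hX hY) := by
  have hH0 := hH.symm.vanishesAtZero
  have hN := extDerForm_vanishesAtZero (shiftG 𝒜) D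
  rw [nMF, formMF, rnBracketM_singleF 0 1 hN hH0, bivMF,
    rnBracketM_singleF 0 1 (elemForm_vanishesAtZero _ π)
      ((hN.insertionOp 0 hH0).sub (((hH0.insertionOp 1 hN).castForm _).smul _))]
  simp only [evalSec2, singleF_self, insertionOp_arity_zero, castForm_zero, smul_zero,
    sub_zero, zero_mul, Int.natAbs_zero, pow_zero, one_smul]
  rw [insertionOp_elemForm_apply_secs _ hπ, evalPXY_sub,
    evalPXY_insertionOp_extDerForm hD hH.symm]
  congr 1
  exact evalPXY_insertionOp_into_extDerForm hH hπ hX hY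

theorem evalSec2_rnBracket_extDer_rnBracket_biv (hH : IsFormExt G c3) (hD : IsExtDer G D)
    (hπ : π ∈ 𝒜 2) (hX : X ∈ 𝒜 1) (hY : Y ∈ 𝒜 1) :
    evalSec2 (rnBracketM (shiftG 𝒜) 0 1 (nMF 𝒜 D)
        (rnBracketM (shiftG 𝒜) 0 1 (bivMF 𝒜 π) (formMF c3))) hX hY
      = evalPXY c3 hπ (hD.grading 1 X hX) hY + evalPXY c3 hπ hX (hD.grading 1 Y hY)
        - D (evalPXY c3 hπ hX hY) := by
  have hH0 := hH.symm.vanishesAtZero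
  have hP := elemForm_vanishesAtZero (shiftG 𝒜) π
  rw [bivMF, formMF, rnBracketM_singleF 0 1 hP hH0, nMF,
    rnBracketM_singleF 0 1 (extDerForm_vanishesAtZero _ D)
      ((hP.insertionOp 0 hH0).sub (((hH0.insertionOp 1 hP).castForm _).smul _))]
  simp only [evalSec2, singleF_self, insertionOp_arity_zero, castForm_zero, smul_zero,
    sub_zero, zero_mul, Int.natAbs_zero, pow_zero, one_smul, Pi.sub_apply]
  have hιπ := insertionOp_elemForm_apply_secs c3 hπ hX hY
  rw [insertionOp_extDerForm_apply_secs hD, eval2Sec, eval2Sec,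
    insertionOp_elemForm_apply_secs c3 hπ, insertionOp_elemForm_apply_secs c3 hπ,
    evalPXY_swap hH.symm hπ hX (hD.grading 1 Y hY), sub_neg_eq_add]
  congr 1
  refine (insertPos_extDerForm 1 _ D _ _ ?_).trans (congrArg D hιπ)
  exact hιπ ▸ mem_shift (by decide) (evalPXY_mem hH hπ hX hY)

end Brackets

theorem rnBracket_H_eval_on_sections_general
    {V : Type*} [AddCommGroup V] [Module ℝ V] {𝒜 : ℤ → Submodule ℝ V}
    (G : Gerstenhaber 𝒜) [DirectSum.Decomposition (shiftG 𝒜)]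
    (c3 : GForm (shiftG 𝒜) 3) (hH : IsFormExt G c3)
    (π : V) (hπ : π ∈ 𝒜 2)
    (D : V →ₗ[ℝ] V) (hD : IsExtDer G D)
    (hNπ : ∀ al nal : OneForm G, IsDualMap G D al nal → D (al.ctr π) = nal.ctr π)
    (X Y : V) (hX : X ∈ 𝒜 1) (hY : Y ∈ 𝒜 1) :
    evalSec2
        (rnBracketM (shiftG 𝒜) 0 1 (bivMF 𝒜 π)
            (rnBracketM (shiftG 𝒜) 0 1 (nMF 𝒜 D) (formMF c3))
          + rnBracketM (shiftG 𝒜) 0 1 (nMF 𝒜 D)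
              (rnBracketM (shiftG 𝒜) 0 1 (bivMF 𝒜 π) (formMF c3))) hX hY
      = (2 : ℝ) • evalPXY c3 hπ (hD.grading 1 X hX) hY
        + (2 : ℝ) • evalPXY c3 hπ hX (hD.grading 1 Y hY) := by
  rw [evalSec2_add, evalSec2_rnBracket_biv_rnBracket_extDer hH hD hπ,
    evalSec2_rnBracket_extDer_rnBracket_biv hH hD hπ, evalPXY_extDer_eq_two_smul hH hD hπ hNπ]
  module

/-- If `N ∘ π^♯ = π^♯ ∘ N^*`, then for all sections `X, Y`:
`([π,[N̲,H̲]]_RN + [N̲,[π,H̲]]_RN)(X,Y) = 2 H̲(π, NX, Y) + 2 H̲(π, X, NY)`. -/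
theorem rnBracket_H_eval_on_sections
    {V : Type*} [AddCommGroup V] [Module ℝ V] {𝒜 : ℤ → Submodule ℝ V}
    (G : Gerstenhaber 𝒜) [DirectSum.Decomposition (shiftG 𝒜)]
    (hmv : IsMultivecGrading 𝒜)
    (c3 : GForm (shiftG 𝒜) 3) (hH : IsFormExt G c3)
    (π : V) (hπ : π ∈ 𝒜 2)
    (D : V →ₗ[ℝ] V) (hD : IsExtDer G D)
    (hNπ : ∀ al nal : OneForm G, IsDualMap G D al nal → D (al.ctr π) = nal.ctr π)
    (X Y : V) (hX : X ∈ 𝒜 1) (hY : Y ∈ 𝒜 1) :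
    evalSec2
        (rnBracketM (shiftG 𝒜) 0 1 (bivMF 𝒜 π)
            (rnBracketM (shiftG 𝒜) 0 1 (nMF 𝒜 D) (formMF c3))
          + rnBracketM (shiftG 𝒜) 0 1 (nMF 𝒜 D)
              (rnBracketM (shiftG 𝒜) 0 1 (bivMF 𝒜 π) (formMF c3))) hX hY
      = (2 : ℝ) • evalPXY c3 hπ (hD.grading 1 X hX) hY
        + (2 : ℝ) • evalPXY c3 hπ hX (hD.grading 1 Y hY) :=
  rnBracket_H_eval_on_sections_general G c3 hH π hπ D hD hNπ X Y hX hY
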